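/- arXiv:1612.03068 — 3 statements merged into one kernel-verified Lean document; each statement's English description precedes it below -/
import Mathlib

section
/- Let φ = (1+√5)/2. For every positive integer k, ⌈⌊k·φ⌋·φ⌉ = ⌊k·φ²⌋. -/
/-!
Since `φ² = φ + 1`, the right-hand side is `n + k` with `n = ⌊kφ⌋`; since `φ = 1 + 1/φ`, the
left-hand side is `n + ⌈n/φ⌉`. Finally `⌈⌊kc⌋/c⌉ = k` for every `c ≥ 1`, because
`kc - 1 < ⌊kc⌋ ≤ kc` divides to `k - 1 ≤ k - 1/c < ⌊kc⌋/c ≤ k`.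
-/

open Real goldenRatio

theorem Int.ceil_floor_mul_div {K : Type*} [Field K] [LinearOrder K] [IsStrictOrderedRing K]
    [FloorRing K] {c : K} (hc : 1 ≤ c) (k : ℤ) : ⌈(⌊k * c⌋ : K) / c⌉ = k := by
  have hc₀ : 0 < c := zero_lt_one.trans_le hc
  rw [Int.ceil_eq_iff, lt_div_iff₀ hc₀, div_le_iff₀ hc₀]
  constructor
  · calc ((k : K) - 1) * c = k * c - c := by ring
      _ ≤ k * c - 1 := by linarith
      _ < ⌊(k : K) * c⌋ := by linarith [Int.lt_floor_add_one ((k : K) * c)]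
  · exact Int.floor_le _

theorem Real.goldenRatio_eq_one_add_inv : φ = 1 + φ⁻¹ := by
  rw [inv_goldenRatio, ← one_sub_goldenRatio, sub_eq_add_neg]

theorem ceil_floor_phi_general (k : ℕ) :
    ⌈(⌊(k : ℝ) * ((1 + Real.sqrt 5) / 2)⌋ : ℝ) * ((1 + Real.sqrt 5) / 2)⌉ =
      ⌊(k : ℝ) * ((1 + Real.sqrt 5) / 2) ^ 2⌋ := by
  change ⌈(⌊(k : ℝ) * φ⌋ : ℝ) * φ⌉ = ⌊(k : ℝ) * φ ^ 2⌋
  set n := ⌊(k : ℝ) * φ⌋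
  have h_floor_sq : ⌊(k : ℝ) * φ ^ 2⌋ = n + k := by
    rw [goldenRatio_sq, mul_add, mul_one, Int.floor_add_natCast]
  have h_mul : (n : ℝ) * φ = n + n / φ := by
    conv_lhs => rw [goldenRatio_eq_one_add_inv]
    ring
  have h_ceil_div : ⌈(n : ℝ) / φ⌉ = k := by
    exact_mod_cast Int.ceil_floor_mul_div one_lt_goldenRatio.le (k : ℤ)
  rw [h_floor_sq, h_mul, Int.ceil_intCast_add, h_ceil_div]

theorem ceil_floor_phi (k : ℕ) (hk : 0 < k) :
    ⌈(⌊(k : ℝ) * ((1 + Real.sqrt 5) / 2)⌋ : ℝ) * ((1 + Real.sqrt 5) / 2)⌉ =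
      ⌊(k : ℝ) * ((1 + Real.sqrt 5) / 2) ^ 2⌋ :=
  ceil_floor_phi_general k
end

section
/- Let φ = (1+√5)/2. For every positive integer k, setting m = ⌊k·φ²⌋, one has ⌊k·φ⌋ = ⌊m·φ⌋ − m. -/
/-!
Write `k φ = n + f` with `n = ⌊k φ⌋` and `0 ≤ f < 1`. Since `φ² = φ + 1`, we get
`⌊k φ²⌋ = n + k`, and substituting `n = k φ - f` gives `(n + k) φ = 2n + k + f (2 - φ)`.
As `0 < 2 - φ < 1`, the last term lies in `[0, 1)`, so `⌊(n + k) φ⌋ = 2n + k`.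
-/

open Real goldenRatio

lemma floor_intCast_mul_goldenRatio_sq (k : ℤ) : ⌊(k : ℝ) * φ ^ 2⌋ = ⌊(k : ℝ) * φ⌋ + k := by
  rw [goldenRatio_sq, mul_add, mul_one, Int.floor_add_intCast]

lemma intCast_floor_add_mul_goldenRatio (k : ℤ) :
    ((⌊(k : ℝ) * φ⌋ + k : ℤ) : ℝ) * φ =
      (2 * ⌊(k : ℝ) * φ⌋ + k : ℤ) + Int.fract ((k : ℝ) * φ) * (2 - φ) := by
  have hn : (⌊(k : ℝ) * φ⌋ : ℝ) = k * φ - Int.fract ((k : ℝ) * φ) := by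
    rw [Int.self_sub_fract]
  push_cast
  rw [hn]
  linear_combination (k : ℝ) * goldenRatio_sq

lemma floor_floor_mul_goldenRatio_sq_mul_goldenRatio (k : ℤ) :
    ⌊(⌊(k : ℝ) * φ ^ 2⌋ : ℝ) * φ⌋ = 2 * ⌊(k : ℝ) * φ⌋ + k := by
  set f := Int.fract ((k : ℝ) * φ)
  have hf₀ : 0 ≤ f := Int.fract_nonneg _
  have hf₁ : f < 1 := Int.fract_lt_one _
  have h₀ : 0 < 2 - φ := by linarith [goldenRatio_lt_two]
  have h₁ : 2 - φ < 1 := by linarith [one_lt_goldenRatio]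
  rw [floor_intCast_mul_goldenRatio_sq, intCast_floor_add_mul_goldenRatio, Int.floor_intCast_add,
    add_eq_left, Int.floor_eq_zero_iff]
  exact ⟨by positivity, by nlinarith⟩

theorem n_from_m_general (k : ℕ) :
    ⌊(k : ℝ) * ((1 + Real.sqrt 5) / 2)⌋ =
      ⌊((⌊(k : ℝ) * ((1 + Real.sqrt 5) / 2) ^ 2⌋ : ℝ)) * ((1 + Real.sqrt 5) / 2)⌋ -
        ⌊(k : ℝ) * ((1 + Real.sqrt 5) / 2) ^ 2⌋ := by
  have hm := floor_intCast_mul_goldenRatio_sq k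
  have hmφ := floor_floor_mul_goldenRatio_sq_mul_goldenRatio k
  push_cast at hm hmφ
  change ⌊(k : ℝ) * φ⌋ = ⌊(⌊(k : ℝ) * φ ^ 2⌋ : ℝ) * φ⌋ - ⌊(k : ℝ) * φ ^ 2⌋
  rw [hmφ, hm]
  ring

theorem n_from_m (k : ℕ) (hk : 0 < k) :
    ⌊(k : ℝ) * ((1 + Real.sqrt 5) / 2)⌋ =
      ⌊((⌊(k : ℝ) * ((1 + Real.sqrt 5) / 2) ^ 2⌋ : ℝ)) * ((1 + Real.sqrt 5) / 2)⌋ -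
        ⌊(k : ℝ) * ((1 + Real.sqrt 5) / 2) ^ 2⌋ :=
  n_from_m_general k
end

section
/- With the doubling construction as above (d of length a² with values in (−a,a), d' of length 4a² built from blocks Bᵢ), if the original sequence satisfies: for all i ≡ j (mod a) with i ≠ j, dᵢ ≢ d_j (mod a), then the new sequence satisfies: for all i ≡ j (mod 2a) with i ≠ j (indices < 4a²), d'ᵢ ≢ d'_j (mod 2a). -/
/-!
Write an index of `d'` as `2a q + r` with `q, r < 2a`. Then
`d' (2a q + r) = d (a (q mod a) + r mod a) + e a`, where `e = 0` if `q < a` and `e = ±1` otherwise.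
Take two indices with the same `r`. If `q ≢ q' (mod a)`, the difference of their `d'`-values is,
mod `a`, a difference of `d`-values at distinct indices congruent mod `a`, hence nonzero mod `a`.
If `q ≡ q' (mod a)` but `q ≠ q'`, exactly one of `q, q'` is `< a`, so the difference
is `(e - e') a` with `e - e'` odd, which `2a` does not divide.
-/

theorem exists_doubling_eq_add_mul {a : ℕ} {d d' : ℕ → ℤ}
    (hB1 : ∀ i < a, ∀ j < 2 * a, d' (2 * a * i + j) = d (a * i + j % a))
    (hB2 : ∀ i < a, ∀ j < 2 * a,
      d' (2 * a * (a + i) + j) =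
        if j < a then d (a * i + j % a) + a else d (a * i + j % a) - a)
    {q r : ℕ} (hq : q < 2 * a) (hr : r < 2 * a) :
    ∃ e : ℤ, d' (2 * a * q + r) = d (a * (q % a) + r % a) + e * a ∧ (Even e ↔ q < a) := by
  rcases lt_or_ge q a with hqa | hqa
  · exact ⟨0, by rw [hB1 q hqa r hr, Nat.mod_eq_of_lt hqa]; ring, by simp [hqa]⟩
  · obtain ⟨p, rfl⟩ := Nat.exists_eq_add_of_le hqa
    have hp : p < a := by omega
    rw [hB2 p hp r hr, Nat.add_mod_left, Nat.mod_eq_of_lt hp]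
    split_ifs
    · exact ⟨1, by ring, by simp⟩
    · exact ⟨-1, by ring, by simp⟩

theorem mul_add_lt_sq {a p s : ℕ} (hp : p < a) (hs : s < a) : a * p + s < a ^ 2 := by
  nlinarith

theorem not_dvd_sub_of_block_ne {a : ℕ} {d : ℕ → ℤ}
    (hmod : ∀ i < a ^ 2, ∀ j < a ^ 2, i % a = j % a → i ≠ j → ¬ ((a : ℤ) ∣ d i - d j))
    {p p' s : ℕ} (hp : p < a) (hp' : p' < a) (hs : s < a) (hne : p ≠ p') :
    ¬ ((a : ℤ) ∣ d (a * p + s) - d (a * p' + s)) := by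
  refine hmod _ (mul_add_lt_sq hp hs) _ (mul_add_lt_sq hp' hs) (by simp) ?_
  intro h
  exact hne (Nat.eq_of_mul_eq_mul_left (by omega) (Nat.add_right_cancel h))

theorem eq_of_mod_eq_of_lt_iff_lt {a q q' : ℕ} (hq : q < 2 * a) (hq' : q' < 2 * a)
    (hmod : q % a = q' % a) (hlt : q < a ↔ q' < a) : q = q' := by
  have mod_eq_sub : ∀ n < 2 * a, a ≤ n → n % a = n - a := fun n hn han => by
    rw [Nat.mod_eq_sub_mod han, Nat.mod_eq_of_lt (by omega)]
  by_cases h : q < a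
  · rwa [Nat.mod_eq_of_lt h, Nat.mod_eq_of_lt (hlt.mp h)] at hmod
  · rw [mod_eq_sub q hq (by omega), mod_eq_sub q' hq' (by omega)] at hmod
    omega

theorem doubling_incongruent_general (a : ℕ) (d d' : ℕ → ℤ)
    (hB1 : ∀ i < a, ∀ j < 2 * a, d' (2 * a * i + j) = d (a * i + j % a))
    (hB2 : ∀ i < a, ∀ j < 2 * a,
      d' (2 * a * (a + i) + j) =
        if j < a then d (a * i + j % a) + a else d (a * i + j % a) - a)
    (hmod : ∀ i < a ^ 2, ∀ j < a ^ 2, i % a = j % a → i ≠ j → ¬ ((a : ℤ) ∣ d i - d j)) :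
    ∀ i < 4 * a ^ 2, ∀ j < 4 * a ^ 2, i % (2 * a) = j % (2 * a) → i ≠ j →
      ¬ ((2 * (a : ℤ)) ∣ d' i - d' j) := by
  intro i hi j hj hij hne hdvd
  have ha : 0 < a := Nat.pos_of_ne_zero (by rintro rfl; simp at hi)
  have hsq : 4 * a ^ 2 = 2 * a * (2 * a) := by ring
  set q := i / (2 * a)
  set q' := j / (2 * a)
  set r := i % (2 * a)
  have hq : q < 2 * a := Nat.div_lt_of_lt_mul (hsq ▸ hi)
  have hq' : q' < 2 * a := Nat.div_lt_of_lt_mul (hsq ▸ hj)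
  have hi_split : 2 * a * q + r = i := Nat.div_add_mod i (2 * a)
  have hj_split : 2 * a * q' + r = j := by rw [hij, Nat.div_add_mod]
  obtain ⟨e, hi_eq, he⟩ := exists_doubling_eq_add_mul hB1 hB2 hq (Nat.mod_lt i (by omega))
  obtain ⟨e', hj_eq, he'⟩ := exists_doubling_eq_add_mul hB1 hB2 hq' (Nat.mod_lt i (by omega))
  rw [hi_split] at hi_eq
  rw [hj_split] at hj_eq
  rw [hi_eq, hj_eq, add_sub_add_comm, ← sub_mul] at hdvd
  by_cases hblock : q % a = q' % a
  · rw [hblock, sub_self, zero_add] at hdvd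
    have hpar : Even (e - e') :=
      even_iff_two_dvd.mpr (Int.dvd_of_mul_dvd_mul_right (by positivity) hdvd)
    have hqq' : q = q' :=
      eq_of_mod_eq_of_lt_iff_lt hq hq' hblock (he.symm.trans ((Int.even_sub.mp hpar).trans he'))
    exact hne (by rw [← hi_split, ← hj_split, hqq'])
  · refine not_dvd_sub_of_block_ne hmod (Nat.mod_lt q ha) (Nat.mod_lt q' ha) (Nat.mod_lt r ha)
      hblock ?_
    exact (dvd_add_left (dvd_mul_left _ _)).mp (dvd_trans (dvd_mul_left _ 2) hdvd)

theorem doubling_incongruent (a : ℕ) (ha : 0 < a) (d d' : ℕ → ℤ)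
    (hd : ∀ i < a ^ 2, -(a : ℤ) < d i ∧ d i < a)
    (hB1 : ∀ i < a, ∀ j < 2 * a, d' (2 * a * i + j) = d (a * i + j % a))
    (hB2 : ∀ i < a, ∀ j < 2 * a,
      d' (2 * a * (a + i) + j) =
        if j < a then d (a * i + j % a) + a else d (a * i + j % a) - a)
    (hmod : ∀ i < a ^ 2, ∀ j < a ^ 2, i % a = j % a → i ≠ j → ¬ ((a : ℤ) ∣ d i - d j)) :
    ∀ i < 4 * a ^ 2, ∀ j < 4 * a ^ 2, i % (2 * a) = j % (2 * a) → i ≠ j →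
      ¬ ((2 * (a : ℤ)) ∣ d' i - d' j) :=
  doubling_incongruent_general a d d' hB1 hB2 hmod
end
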